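/- Let Λ be a finite simple graph with vertices v_1, …, v_n and n ≥ 3, and let Γ'(Λ) be the graph of the second explicit construction. Then Γ'(Λ) has no non-trivial graph automorphisms, i.e., every adjacency-preserving bijection of its vertex set is the identity. -/

import Mathlib

open SimpleGraph
open scoped commutatorElement

/-- The set of commutator relations defining the right-angled Artin group of a graph. -/
def raagRels {V : Type} (G : SimpleGraph V) : Set (FreeGroup V) :=
  {r | ∃ v w : V, G.Adj v w ∧ r = ⁅FreeGroup.of v, FreeGroup.of w⁆}

/-- The right-angled Artin group of a graph `G`. -/
abbrev RAAG {V : Type} (G : SimpleGraph V) : Type := PresentedGroup (raagRels G)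

/-- The subgroup of inner automorphisms of a group. -/
def Inn (G : Type*) [Group G] : Subgroup (MulAut G) := (MulAut.conj (G := G)).range

instance Inn.normal (G : Type*) [Group G] : (Inn G).Normal := by
  constructor
  intro x hx φ
  obtain ⟨g, rfl⟩ := hx
  refine ⟨φ g, ?_⟩
  ext h
  simp [MulAut.conj, mul_assoc]

/-- The outer automorphism group of a group. -/
abbrev Out (G : Type*) [Group G] : Type _ := MulAut G ⧸ Inn G

/-- The group of pure symmetric automorphisms of the right-angled Artin group of `G`:
those automorphisms sending each generator to a conjugate of itself. -/
def PSA {V : Type} (G : SimpleGraph V) : Subgroup (MulAut (RAAG G)) where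
  carrier := {φ | ∀ v : V,
    IsConj (PresentedGroup.of (rels := raagRels G) v) (φ (PresentedGroup.of v))}
  one_mem' := fun _ => IsConj.refl _
  mul_mem' := by
    intro φ ψ hφ hψ v
    rw [MulAut.mul_apply]
    exact (hφ v).trans (φ.toMonoidHom.map_isConj (hψ v))
  inv_mem' := by
    intro φ hφ v
    have h := (φ⁻¹ : MulAut (RAAG G)).toMonoidHom.map_isConj (hφ v)
    simp only [MulEquiv.coe_toMonoidHom] at h
    have h2 : (φ⁻¹ : MulAut (RAAG G)) (φ (PresentedGroup.of v)) = PresentedGroup.of v := by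
      simp
    rw [h2] at h
    exact h.symm

/-- The group of pure symmetric outer automorphisms: the image of `PSA` in `Out`. -/
def PSO {V : Type} (G : SimpleGraph V) : Subgroup (Out (RAAG G)) :=
  (PSA G).map (QuotientGroup.mk' (Inn (RAAG G)))

/-- The star of a vertex: the vertex together with its neighbours. -/
def graphStar {V : Type} (G : SimpleGraph V) (v : V) : Set V := insert v (G.neighborSet v)

/-- `IsCompOf G s A` says that `A` is the vertex set of a connected component of the
induced subgraph of `G` on `s`. -/
def IsCompOf {V : Type} (G : SimpleGraph V) (s : Set V) (A : Set V) : Prop :=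
  ∃ a : s, A = {x : V | ∃ hx : x ∈ s, (SimpleGraph.induce s G).Reachable ⟨x, hx⟩ a}

/-- The support graph of `G` at a vertex `v`: vertices are the connected components of
`G - st(v)`, and two distinct components `A`, `B` are adjacent if there is `b ∈ B` such
that `A` is also a connected component of `G - st(b)`, or symmetrically. -/
def SupportGraph {V : Type} (G : SimpleGraph V) (v : V) :
    SimpleGraph {A : Set V // IsCompOf G (graphStar G v)ᶜ A} :=
  SimpleGraph.fromRel (fun A B => ∃ b ∈ B.1, IsCompOf G (graphStar G b)ᶜ A.1)

/-- A pair of distinct non-adjacent vertices `(v, w)` is a separating intersection of links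
if `G - (lk(v) ∩ lk(w))` has a connected component containing neither `v` nor `w`. -/
def SILPair {V : Type} (G : SimpleGraph V) (v w : V) : Prop :=
  v ≠ w ∧ ¬ G.Adj v w ∧
    ∃ A : Set V, IsCompOf G (G.neighborSet v ∩ G.neighborSet w)ᶜ A ∧ v ∉ A ∧ w ∉ A
/-- Vertices of the graph `Γ(Λ)`: the vertices of `Λ` (indexed by `Fin n`, with `v i`
denoting `v_{i+1}`) together with new vertices `a₁, a₂, b₁, b₂, c₁, …, c_n, d₁, d₂`. -/
inductive GV (n : ℕ) : Type where
  | v (i : Fin n)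
  | a1 | a2 | b1 | b2
  | c (i : Fin n)
  | d1 | d2
deriving DecidableEq

/-- The edge relation of the graph `Γ(Λ)` (to be symmetrized by `SimpleGraph.fromRel`). -/
def gammaRel {n : ℕ} (Λ : SimpleGraph (Fin n)) : GV n → GV n → Prop
  | .v i, .v j => Λ.Adj i j
  | .c i, .v j => j = i ∨ (j : ℕ) = ((i : ℕ) + 1) % n
  | .c _, .d1 => True
  | .c _, .d2 => True
  | .d1, .v j => (j : ℕ) = 0
  | .d1, .b1 => True
  | .d2, .v j => (j : ℕ) ≠ 0
  | .d2, .b2 => True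
  | .v _, .b1 => True
  | .v _, .b2 => True
  | .b1, .a1 => True
  | .b2, .a2 => True
  | .a1, .a2 => True
  | _, _ => False

/-- The graph `Γ(Λ)` of the explicit construction. -/
def GammaGraph {n : ℕ} (Λ : SimpleGraph (Fin n)) : SimpleGraph (GV n) :=
  SimpleGraph.fromRel (gammaRel Λ)

/-- Vertices of the graph `Γ'(Λ)`: the vertices of `Λ` (indexed by `Fin n`, with `v i`
denoting `v_{i+1}`) together with new vertices
`a₁, a₂, a₃, b₁, b₂, b₃, c₁, …, c_n, d₁, d₂, d₃`. -/
inductive GV' (n : ℕ) : Type where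
  | v (i : Fin n)
  | a1 | a2 | a3 | b1 | b2 | b3
  | c (i : Fin n)
  | d1 | d2 | d3
deriving DecidableEq

/-- The edge relation of the graph `Γ'(Λ)` (to be symmetrized by `SimpleGraph.fromRel`). -/
def gammaRel' {n : ℕ} (Λ : SimpleGraph (Fin n)) : GV' n → GV' n → Prop
  | .v i, .v j => Λ.Adj i j
  | .c i, .v j => j = i ∨ (j : ℕ) = ((i : ℕ) + 1) % n
  | .c _, .d1 => True
  | .c _, .d2 => True
  | .c _, .d3 => True
  | .d1, .v j => (j : ℕ) = 0
  | .d1, .b1 => True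
  | .d2, .v j => (j : ℕ) = 1
  | .d3, .v j => 2 ≤ (j : ℕ)
  | .d3, .b3 => True
  | .d2, .d3 => True
  | .v _, .b1 => True
  | .v _, .b2 => True
  | .v _, .b3 => True
  | .b1, .a1 => True
  | .b2, .a2 => True
  | .b3, .a3 => True
  | .a1, .a2 => True
  | .a1, .a3 => True
  | .a2, .a3 => True
  | _, _ => False

/-- The graph `Γ'(Λ)` of the second explicit construction. -/
def GammaGraph' {n : ℕ} (Λ : SimpleGraph (Fin n)) : SimpleGraph (GV' n) :=
  SimpleGraph.fromRel (gammaRel' Λ)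

/-!
Every automorphism preserves the set of vertices of eccentricity at most two, namely the `v i` and
the `b`'s. Among the other vertices, the `a`'s and `d₂` are those with exactly one neighbour of
eccentricity at most two, and `d₂` is the only one of them not adjacent to another; so `d₂` is
fixed, the `a`'s are permuted among themselves, and so are the `b`'s, their neighbours of small
eccentricity. Each remaining gadget vertex is then characterised by these classes together with
adjacency to, or distinctness from, vertices already fixed, in the order
`d₃, b₃, a₃, d₁, b₁, a₁, b₂, a₂`.
Finally the `v`'s are the common neighbours of `b₁, b₂` and the `c`'s those of `d₁, d₂`, and
walking along the cycle `v 0, c 0, v 1, c 1, …` fixes them one by one; since `n ≥ 3`, `c 0` is the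
only `c` adjacent to both `v 0` and `v 1`.
-/

namespace SimpleGraph

variable {V W : Type*} {G : SimpleGraph V} {H : SimpleGraph W}

def EccLeTwo (G : SimpleGraph V) (x : V) : Prop :=
  ∀ y, y ≠ x → G.Adj x y ∨ ∃ z, G.Adj x z ∧ G.Adj z y

theorem not_eccLeTwo_of {x y : V} (hyx : y ≠ x) (hxy : ¬G.Adj x y)
    (h : ∀ z, G.Adj x z → ¬G.Adj z y) : ¬G.EccLeTwo x := fun hx =>
  (hx y hyx).elim hxy fun ⟨z, hxz, hzy⟩ => h z hxz hzy

namespace Iso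

theorem eccLeTwo_apply_iff (φ : G ≃g H) (x : V) : H.EccLeTwo (φ x) ↔ G.EccLeTwo x := by
  refine (φ.toEquiv.forall_congr fun y => ?_).symm
  refine imp_congr φ.injective.ne_iff.symm (or_congr φ.map_adj_iff.symm ?_)
  exact φ.toEquiv.exists_congr fun z => and_congr φ.map_adj_iff.symm φ.map_adj_iff.symm

theorem exists_adj_apply_iff (φ : G ≃g H) {P : W → Prop} {Q : V → Prop}
    (hPQ : ∀ y, P (φ y) ↔ Q y) (x : V) :
    (∃ y, H.Adj (φ x) y ∧ P y) ↔ ∃ y, G.Adj x y ∧ Q y :=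
  (φ.toEquiv.exists_congr fun y => and_congr φ.map_adj_iff.symm (hPQ y).symm).symm

theorem existsUnique_adj_apply_iff (φ : G ≃g H) {P : W → Prop} {Q : V → Prop}
    (hPQ : ∀ y, P (φ y) ↔ Q y) (x : V) :
    (∃! y, H.Adj (φ x) y ∧ P y) ↔ ∃! y, G.Adj x y ∧ Q y :=
  (φ.toEquiv.existsUnique_congr fun y => and_congr φ.map_adj_iff.symm (hPQ y).symm).symm

theorem adj_apply_iff_of_apply_eq (φ : G ≃g G) {z : V} (hz : φ z = z) (x : V) :
    G.Adj (φ x) z ↔ G.Adj x z := by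
  conv_lhs => rw [← hz]
  exact φ.map_adj_iff

theorem apply_eq_iff_of_apply_eq (φ : G ≃g G) {z : V} (hz : φ z = z) (x : V) :
    φ x = z ↔ x = z := by
  conv_lhs => rw [← hz]
  exact φ.injective.eq_iff

theorem apply_eq_self_of_forall_iff_eq (φ : G ≃g G) {P : V → Prop}
    (hP : ∀ y, P (φ y) ↔ P y) {x : V} (hx : ∀ y, P y ↔ y = x) : φ x = x :=
  (hx (φ x)).1 ((hP x).2 ((hx x).2 rfl))

theorem apply_eq_self_of_unique_adj (φ : G ≃g G) {P : V → Prop}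
    (hP : ∀ y, P (φ y) ↔ P y) {z : V} (hz : φ z = z) {x : V}
    (hx : ∀ y, P y ∧ G.Adj y z ↔ y = x) : φ x = x :=
  φ.apply_eq_self_of_forall_iff_eq
    (fun y => and_congr (hP y) (φ.adj_apply_iff_of_apply_eq hz y)) hx

end Iso

end SimpleGraph

namespace GammaGraph'

open SimpleGraph GV'

variable {n : ℕ} {Λ : SimpleGraph (Fin n)}

theorem adj_iff (x y : GV' n) :
    (GammaGraph' Λ).Adj x y ↔ x ≠ y ∧ (gammaRel' Λ x y ∨ gammaRel' Λ y x) :=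
  Iff.rfl

attribute [local simp] adj_iff gammaRel'

theorem eq_add_one_mod_iff {i j : ℕ} (hi : i < n) :
    j = (i + 1) % n ↔ j = i + 1 ∧ i + 1 < n ∨ j = 0 ∧ i + 1 = n := by
  rcases (show i + 1 ≤ n from hi).lt_or_eq with h | h
  · rw [Nat.mod_eq_of_lt h]; omega
  · rw [h, Nat.mod_self]; omega

theorem exists_d_adj_v_and_c (i : Fin n) :
    ∃ d, (GammaGraph' Λ).Adj (v i) d ∧ ∀ k, (GammaGraph' Λ).Adj d (c k) := by
  by_cases h0 : (i : ℕ) = 0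
  · exact ⟨d1, by simp [h0], by simp⟩
  by_cases h1 : (i : ℕ) = 1
  · exact ⟨d2, by simp [h1], by simp⟩
  · exact ⟨d3, by simp; omega, by simp⟩

theorem eccLeTwo_v (i : Fin n) : (GammaGraph' Λ).EccLeTwo (v i) := by
  intro y hy
  obtain ⟨d, hid, hdc⟩ := exists_d_adj_v_and_c (Λ := Λ) i
  cases y with
  | v k | a1 => exact .inr ⟨b1, by simp, by simp⟩
  | a2 => exact .inr ⟨b2, by simp, by simp⟩
  | a3 => exact .inr ⟨b3, by simp, by simp⟩
  | b1 | b2 | b3 => exact .inl (by simp)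
  | c k => exact .inr ⟨d, hid, hdc k⟩
  | d1 | d2 | d3 => exact .inr ⟨c i, by simp, by simp⟩

theorem eccLeTwo_b (hn : 3 ≤ n) {x : GV' n} (hx : x = b1 ∨ x = b2 ∨ x = b3) :
    (GammaGraph' Λ).EccLeTwo x := by
  rcases hx with rfl | rfl | rfl <;> intro y hy <;>
    rcases y with k | _ | _ | _ | _ | _ | _ | k | _ | _ | _ <;>
    first
    | exact absurd rfl hy
    | left; simp; done
    | right
      first
      | refine ⟨v k, ?_, ?_⟩ <;> simp
      | refine ⟨v ⟨0, by omega⟩, ?_, ?_⟩ <;> simp; done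
      | refine ⟨v ⟨1, by omega⟩, ?_, ?_⟩ <;> simp; done
      | refine ⟨v ⟨2, by omega⟩, ?_, ?_⟩ <;> simp; done
      | refine ⟨a1, ?_, ?_⟩ <;> simp; done
      | refine ⟨a2, ?_, ?_⟩ <;> simp; done
      | refine ⟨a3, ?_, ?_⟩ <;> simp

theorem eccLeTwo_iff (hn : 3 ≤ n) (x : GV' n) :
    (GammaGraph' Λ).EccLeTwo x ↔ (∃ i, x = v i) ∨ x = b1 ∨ x = b2 ∨ x = b3 := by
  refine ⟨fun hx => ?_, ?_⟩
  · cases x with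
    | v i => exact .inl ⟨i, rfl⟩
    | b1 | b2 | b3 => simp
    | a1 | a2 | a3 =>
      exact absurd hx (not_eccLeTwo_of (y := c ⟨0, by omega⟩) (by simp) (by simp)
        fun z => by cases z <;> simp)
    | c i | d2 | d3 =>
      exact absurd hx (not_eccLeTwo_of (y := a1) (by simp) (by simp) fun z => by cases z <;> simp)
    | d1 =>
      exact absurd hx (not_eccLeTwo_of (y := a2) (by simp) (by simp) fun z => by cases z <;> simp)
  · rintro (⟨i, rfl⟩ | hb)
    exacts [eccLeTwo_v i, eccLeTwo_b hn hb]

def IsTip (Λ : SimpleGraph (Fin n)) (x : GV' n) : Prop :=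
  ¬(GammaGraph' Λ).EccLeTwo x ∧ ∃! y, (GammaGraph' Λ).Adj x y ∧ (GammaGraph' Λ).EccLeTwo y

def IsAVertex (Λ : SimpleGraph (Fin n)) (x : GV' n) : Prop :=
  IsTip Λ x ∧ ∃ y, (GammaGraph' Λ).Adj x y ∧ IsTip Λ y

def IsBVertex (Λ : SimpleGraph (Fin n)) (x : GV' n) : Prop :=
  (GammaGraph' Λ).EccLeTwo x ∧ ∃ y, (GammaGraph' Λ).Adj x y ∧ IsAVertex Λ y

theorem isTip_iff (hn : 3 ≤ n) (x : GV' n) :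
    IsTip Λ x ↔ x = a1 ∨ x = a2 ∨ x = a3 ∨ x = d2 := by
  simp only [IsTip, eccLeTwo_iff hn]
  cases x with
  | v _ | b1 | b2 | b3 => simp
  | a1 => exact iff_of_true ⟨by simp, b1, by simp, fun y => by cases y <;> simp⟩ (by simp)
  | a2 => exact iff_of_true ⟨by simp, b2, by simp, fun y => by cases y <;> simp⟩ (by simp)
  | a3 => exact iff_of_true ⟨by simp, b3, by simp, fun y => by cases y <;> simp⟩ (by simp)
  | d2 => exact iff_of_true ⟨by simp, v ⟨1, by omega⟩, by simp,
      fun y => by cases y <;> simp [Fin.ext_iff]⟩ (by simp)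
  | c i =>
    refine iff_of_false (fun ⟨_, h⟩ => ?_) (by simp)
    have := h.unique (y₁ := v i) (y₂ := v ⟨((i : ℕ) + 1) % n, Nat.mod_lt _ (by omega)⟩)
      (by simp) (by simp)
    simp [Fin.ext_iff, eq_add_one_mod_iff] at this
    omega
  | d1 =>
    refine iff_of_false (fun ⟨_, h⟩ => ?_) (by simp)
    simpa using h.unique (y₁ := v ⟨0, by omega⟩) (y₂ := b1) (by simp) (by simp)
  | d3 =>
    refine iff_of_false (fun ⟨_, h⟩ => ?_) (by simp)
    simpa using h.unique (y₁ := v ⟨2, by omega⟩) (y₂ := b3) (by simp) (by simp)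

theorem isAVertex_iff (hn : 3 ≤ n) (x : GV' n) :
    IsAVertex Λ x ↔ x = a1 ∨ x = a2 ∨ x = a3 := by
  cases x <;> simp [IsAVertex, isTip_iff hn, and_or_left, exists_or]

theorem isBVertex_iff (hn : 3 ≤ n) (x : GV' n) :
    IsBVertex Λ x ↔ x = b1 ∨ x = b2 ∨ x = b3 := by
  cases x <;> simp [IsBVertex, isAVertex_iff hn, eccLeTwo_iff hn, and_or_left, exists_or]

theorem adj_b1_and_adj_b2_iff (y : GV' n) :
    (GammaGraph' Λ).Adj y b1 ∧ (GammaGraph' Λ).Adj y b2 ↔ ∃ i, y = v i := by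
  cases y <;> simp

theorem adj_d1_and_adj_d2_iff (y : GV' n) :
    (GammaGraph' Λ).Adj y d1 ∧ (GammaGraph' Λ).Adj y d2 ↔ ∃ i, y = c i := by
  cases y <;> simp; omega

section Automorphism

variable (φ : GammaGraph' Λ ≃g GammaGraph' Λ)

theorem isTip_apply_iff (x : GV' n) : IsTip Λ (φ x) ↔ IsTip Λ x :=
  and_congr (not_congr (φ.eccLeTwo_apply_iff x))
    (φ.existsUnique_adj_apply_iff φ.eccLeTwo_apply_iff x)

theorem isAVertex_apply_iff (x : GV' n) : IsAVertex Λ (φ x) ↔ IsAVertex Λ x :=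
  and_congr (isTip_apply_iff φ x) (φ.exists_adj_apply_iff (isTip_apply_iff φ) x)

theorem isBVertex_apply_iff (x : GV' n) : IsBVertex Λ (φ x) ↔ IsBVertex Λ x :=
  and_congr (φ.eccLeTwo_apply_iff x) (φ.exists_adj_apply_iff (isAVertex_apply_iff φ) x)

theorem apply_d2 (hn : 3 ≤ n) : φ d2 = d2 :=
  φ.apply_eq_self_of_forall_iff_eq
    (P := fun y => IsTip Λ y ∧ ¬∃ z, (GammaGraph' Λ).Adj y z ∧ IsTip Λ z)
    (fun y => and_congr (isTip_apply_iff φ y)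
      (not_congr (φ.exists_adj_apply_iff (isTip_apply_iff φ) y)))
    (fun y => by cases y <;> simp [isTip_iff hn, and_or_left, exists_or])

theorem apply_d3 (hn : 3 ≤ n) : φ d3 = d3 :=
  φ.apply_eq_self_of_unique_adj
    (P := fun y => ¬(GammaGraph' Λ).EccLeTwo y ∧ ∃ z, (GammaGraph' Λ).Adj y z ∧ IsBVertex Λ z)
    (fun y => and_congr (not_congr (φ.eccLeTwo_apply_iff y))
      (φ.exists_adj_apply_iff (isBVertex_apply_iff φ) y))
    (apply_d2 φ hn)
    (fun y => by cases y <;> simp [eccLeTwo_iff hn, isBVertex_iff hn, and_or_left, exists_or])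

theorem apply_b3 (hn : 3 ≤ n) : φ b3 = b3 :=
  φ.apply_eq_self_of_unique_adj (isBVertex_apply_iff φ) (apply_d3 φ hn)
    (fun y => by cases y <;> simp [isBVertex_iff hn])

theorem apply_d1 (hn : 3 ≤ n) : φ d1 = d1 :=
  φ.apply_eq_self_of_forall_iff_eq
    (P := fun y => ¬(GammaGraph' Λ).EccLeTwo y ∧ ¬IsAVertex Λ y ∧ y ≠ d3 ∧
      ∃ z, (GammaGraph' Λ).Adj y z ∧ IsBVertex Λ z)
    (fun y => and_congr (not_congr (φ.eccLeTwo_apply_iff y)) <|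
      and_congr (not_congr (isAVertex_apply_iff φ y)) <|
      and_congr (not_congr (φ.apply_eq_iff_of_apply_eq (apply_d3 φ hn) y))
        (φ.exists_adj_apply_iff (isBVertex_apply_iff φ) y))
    (fun y => by
      cases y <;>
        simp [eccLeTwo_iff hn, isAVertex_iff hn, isBVertex_iff hn, and_or_left, exists_or])

theorem apply_b1 (hn : 3 ≤ n) : φ b1 = b1 :=
  φ.apply_eq_self_of_unique_adj (isBVertex_apply_iff φ) (apply_d1 φ hn)
    (fun y => by cases y <;> simp [isBVertex_iff hn])

theorem apply_b2 (hn : 3 ≤ n) : φ b2 = b2 :=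
  φ.apply_eq_self_of_forall_iff_eq (P := fun y => IsBVertex Λ y ∧ y ≠ b1 ∧ y ≠ b3)
    (fun y => and_congr (isBVertex_apply_iff φ y) <|
      and_congr (not_congr (φ.apply_eq_iff_of_apply_eq (apply_b1 φ hn) y))
        (not_congr (φ.apply_eq_iff_of_apply_eq (apply_b3 φ hn) y)))
    (fun y => by cases y <;> simp [isBVertex_iff hn])

theorem apply_a1 (hn : 3 ≤ n) : φ a1 = a1 :=
  φ.apply_eq_self_of_unique_adj (isAVertex_apply_iff φ) (apply_b1 φ hn)
    (fun y => by cases y <;> simp [isAVertex_iff hn])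

theorem apply_a2 (hn : 3 ≤ n) : φ a2 = a2 :=
  φ.apply_eq_self_of_unique_adj (isAVertex_apply_iff φ) (apply_b2 φ hn)
    (fun y => by cases y <;> simp [isAVertex_iff hn])

theorem apply_a3 (hn : 3 ≤ n) : φ a3 = a3 :=
  φ.apply_eq_self_of_unique_adj (isAVertex_apply_iff φ) (apply_b3 φ hn)
    (fun y => by cases y <;> simp [isAVertex_iff hn])

theorem adj_b1_and_adj_b2_apply_iff (hn : 3 ≤ n) (y : GV' n) :
    (GammaGraph' Λ).Adj (φ y) b1 ∧ (GammaGraph' Λ).Adj (φ y) b2 ↔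
      (GammaGraph' Λ).Adj y b1 ∧ (GammaGraph' Λ).Adj y b2 :=
  and_congr (φ.adj_apply_iff_of_apply_eq (apply_b1 φ hn) y)
    (φ.adj_apply_iff_of_apply_eq (apply_b2 φ hn) y)

theorem adj_d1_and_adj_d2_apply_iff (hn : 3 ≤ n) (y : GV' n) :
    (GammaGraph' Λ).Adj (φ y) d1 ∧ (GammaGraph' Λ).Adj (φ y) d2 ↔
      (GammaGraph' Λ).Adj y d1 ∧ (GammaGraph' Λ).Adj y d2 :=
  and_congr (φ.adj_apply_iff_of_apply_eq (apply_d1 φ hn) y)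
    (φ.adj_apply_iff_of_apply_eq (apply_d2 φ hn) y)

theorem apply_v_zero (hn : 3 ≤ n) : φ (v ⟨0, by omega⟩) = v ⟨0, by omega⟩ :=
  φ.apply_eq_self_of_unique_adj
    (P := fun y => (GammaGraph' Λ).Adj y b1 ∧ (GammaGraph' Λ).Adj y b2)
    (adj_b1_and_adj_b2_apply_iff φ hn) (apply_d1 φ hn) fun y => by
      rw [adj_b1_and_adj_b2_iff]
      cases y <;> simp [Fin.ext_iff]

theorem apply_v_one (hn : 3 ≤ n) : φ (v ⟨1, by omega⟩) = v ⟨1, by omega⟩ :=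
  φ.apply_eq_self_of_unique_adj
    (P := fun y => (GammaGraph' Λ).Adj y b1 ∧ (GammaGraph' Λ).Adj y b2)
    (adj_b1_and_adj_b2_apply_iff φ hn) (apply_d2 φ hn) fun y => by
      rw [adj_b1_and_adj_b2_iff]
      cases y <;> simp [Fin.ext_iff]

theorem apply_c_zero (hn : 3 ≤ n) : φ (c ⟨0, by omega⟩) = c ⟨0, by omega⟩ :=
  φ.apply_eq_self_of_unique_adj
    (P := fun y => ((GammaGraph' Λ).Adj y d1 ∧ (GammaGraph' Λ).Adj y d2) ∧
      (GammaGraph' Λ).Adj y (v ⟨0, by omega⟩))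
    (fun y => and_congr (adj_d1_and_adj_d2_apply_iff φ hn y)
      (φ.adj_apply_iff_of_apply_eq (apply_v_zero φ hn) y))
    (apply_v_one φ hn) fun y => by
      rw [adj_d1_and_adj_d2_iff]
      cases y <;> simp [Fin.ext_iff, eq_add_one_mod_iff]
      omega

theorem apply_v_succ (hn : 3 ≤ n) {k : ℕ} (hk : k + 1 < n)
    (hv : φ (v ⟨k, by omega⟩) = v ⟨k, by omega⟩)
    (hc : φ (c ⟨k, by omega⟩) = c ⟨k, by omega⟩) :
    φ (v ⟨k + 1, hk⟩) = v ⟨k + 1, hk⟩ :=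
  φ.apply_eq_self_of_unique_adj
    (P := fun y => ((GammaGraph' Λ).Adj y b1 ∧ (GammaGraph' Λ).Adj y b2) ∧ y ≠ v ⟨k, by omega⟩)
    (fun y => and_congr (adj_b1_and_adj_b2_apply_iff φ hn y)
      (not_congr (φ.apply_eq_iff_of_apply_eq hv y)))
    hc fun y => by
      rw [adj_b1_and_adj_b2_iff]
      cases y <;> simp [Fin.ext_iff, eq_add_one_mod_iff (show k < n by omega)]
      omega

theorem apply_c_succ (hn : 3 ≤ n) {k : ℕ} (hk : k + 1 < n)
    (hc : φ (c ⟨k, by omega⟩) = c ⟨k, by omega⟩) (hv : φ (v ⟨k + 1, hk⟩) = v ⟨k + 1, hk⟩) :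
    φ (c ⟨k + 1, hk⟩) = c ⟨k + 1, hk⟩ :=
  φ.apply_eq_self_of_unique_adj
    (P := fun y => ((GammaGraph' Λ).Adj y d1 ∧ (GammaGraph' Λ).Adj y d2) ∧ y ≠ c ⟨k, by omega⟩)
    (fun y => and_congr (adj_d1_and_adj_d2_apply_iff φ hn y)
      (not_congr (φ.apply_eq_iff_of_apply_eq hc y)))
    hv fun y => by
      rw [adj_d1_and_adj_d2_iff]
      cases y <;> simp [Fin.ext_iff, eq_add_one_mod_iff]
      omega

theorem apply_v_and_c (hn : 3 ≤ n) :
    ∀ k (hk : k < n), φ (v ⟨k, hk⟩) = v ⟨k, hk⟩ ∧ φ (c ⟨k, hk⟩) = c ⟨k, hk⟩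
  | 0, _ => ⟨apply_v_zero φ hn, apply_c_zero φ hn⟩
  | k + 1, hk =>
    have ⟨hv, hc⟩ := apply_v_and_c hn k (by omega)
    have hv' := apply_v_succ φ hn hk hv hc
    ⟨hv', apply_c_succ φ hn hk hc hv'⟩

end Automorphism

end GammaGraph'

open GammaGraph' in
/-- For `Λ` with `n ≥ 3` vertices, `Γ'(Λ)` has no non-trivial graph
automorphisms. -/
theorem gammaGraph'_no_nontrivial_automorphisms
    (n : ℕ) (hn : 3 ≤ n) (Λ : SimpleGraph (Fin n)) :
    ∀ φ : GammaGraph' Λ ≃g GammaGraph' Λ, ∀ x : GV' n, φ x = x := by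
  intro φ x
  cases x with
  | v i => exact (apply_v_and_c φ hn i i.isLt).1
  | c i => exact (apply_v_and_c φ hn i i.isLt).2
  | a1 => exact apply_a1 φ hn
  | a2 => exact apply_a2 φ hn
  | a3 => exact apply_a3 φ hn
  | b1 => exact apply_b1 φ hn
  | b2 => exact apply_b2 φ hn
  | b3 => exact apply_b3 φ hn
  | d1 => exact apply_d1 φ hn
  | d2 => exact apply_d2 φ hn
  | d3 => exact apply_d3 φ hn
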